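/- arXiv:2202.00639 — 6 statements merged into one kernel-verified Lean document; each statement's English description precedes it below -/
import Mathlib

section
/- For all integers n, m with 1 < n ≤ m, there exists an n × m matrix with nonnegative real entries, all column sums equal to n and all row sums equal to m, whose number of nonzero entries equals n + m - gcd(n, m). -/
open Finset

def DS (n m : ℕ) (A : Matrix (Fin n) (Fin m) ℝ) : Prop :=
  (∀ i j, 0 ≤ A i j) ∧ (∀ j, ∑ i, A i j = (n : ℝ)) ∧ (∀ i, ∑ j, A i j = (m : ℝ))

noncomputable def supp {n m : ℕ} (A : Matrix (Fin n) (Fin m) ℝ) : Finset (Fin n × Fin m) :=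
  Finset.univ.filter fun p => A p.1 p.2 ≠ 0

noncomputable def S (n m : ℕ) : ℕ :=
  sInf {k | ∃ A : Matrix (Fin n) (Fin m) ℝ, DS n m A ∧ (supp A).card = k}

def IsExtremal {n m : ℕ} (M : Matrix (Fin n) (Fin m) ℝ) : Prop :=
  DS n m M ∧ ∀ (A B : Matrix (Fin n) (Fin m) ℝ) (t : ℝ), DS n m A → DS n m B →
    0 < t → t < 1 → M = t • A + (1 - t) • B → A = M ∧ B = M


/-! Gluing `n • 1` to the right of an `n × k` solution gives an `n × (k + n)` one: the support
grows by `n`, exactly as `n + m - gcd n m` does, since `gcd n (k + n) = gcd n k`. Together with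
transposition this runs the subtractive Euclidean algorithm on `(n, m)` down to a matrix with no
rows, where the empty matrix is a solution. -/

open scoped Matrix

lemma card_supp_eq_sum {n m : ℕ} (A : Matrix (Fin n) (Fin m) ℝ) :
    (supp A).card = ∑ i, ∑ j, if A i j ≠ 0 then 1 else 0 := by
  rw [supp, card_filter, Fintype.sum_prod_type]

lemma card_supp_transpose {n m : ℕ} (A : Matrix (Fin n) (Fin m) ℝ) :
    (supp Aᵀ).card = (supp A).card := by
  rw [card_supp_eq_sum, card_supp_eq_sum, Finset.sum_comm]
  rfl

lemma DS.transpose {n m : ℕ} {A : Matrix (Fin n) (Fin m) ℝ} (hA : DS n m A) : DS m n Aᵀ :=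
  ⟨fun i j => hA.1 j i, hA.2.2, hA.2.1⟩

def appendDiagonal {n k : ℕ} (B : Matrix (Fin n) (Fin k) ℝ) : Matrix (Fin n) (Fin (k + n)) ℝ :=
  Matrix.of fun i => Fin.append (B i) (Pi.single i (n : ℝ))

section appendDiagonal

variable {n k : ℕ}

@[simp]
lemma appendDiagonal_castAdd (B : Matrix (Fin n) (Fin k) ℝ) (i : Fin n) (j : Fin k) :
    appendDiagonal B i (Fin.castAdd n j) = B i j := by
  simp [appendDiagonal]

@[simp]
lemma appendDiagonal_natAdd (B : Matrix (Fin n) (Fin k) ℝ) (i : Fin n) (j : Fin n) :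
    appendDiagonal B i (Fin.natAdd k j) = if j = i then (n : ℝ) else 0 := by
  simp [appendDiagonal, Pi.single_apply]

lemma DS.appendDiagonal {B : Matrix (Fin n) (Fin k) ℝ} (hB : DS n k B) :
    DS n (k + n) (appendDiagonal B) := by
  obtain ⟨hnonneg, hcol, hrow⟩ := hB
  refine ⟨fun i j => ?_, fun j => ?_, fun i => ?_⟩
  · refine Fin.addCases (fun j => ?_) (fun j => ?_) j
    · simpa using hnonneg i j
    · simp only [appendDiagonal_natAdd]
      split_ifs <;> positivity
  · refine Fin.addCases (fun j => ?_) (fun j => ?_) j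
    · simpa using hcol j
    · simp
  · simp [Fin.sum_univ_add, hrow i, add_comm]

lemma card_supp_appendDiagonal (B : Matrix (Fin n) (Fin k) ℝ) :
    (supp (appendDiagonal B)).card = (supp B).card + n := by
  have hrow : ∀ i : Fin n, (∑ j, if appendDiagonal B i j ≠ 0 then 1 else 0) =
      (∑ j, if B i j ≠ 0 then 1 else 0) + 1 := by
    intro i
    have hn : (n : ℝ) ≠ 0 := Nat.cast_ne_zero.2 (Fin.pos i).ne'
    simp [Fin.sum_univ_add, hn]
  simp only [card_supp_eq_sum, hrow, sum_add_distrib, sum_const, card_univ, Fintype.card_fin,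
    smul_eq_mul, mul_one]

end appendDiagonal

def ExistsSparseDS (n m : ℕ) : Prop :=
  ∃ A : Matrix (Fin n) (Fin m) ℝ, DS n m A ∧ (supp A).card = n + m - Nat.gcd n m

lemma ExistsSparseDS.symm {n m : ℕ} : ExistsSparseDS n m → ExistsSparseDS m n := by
  rintro ⟨A, hA, hcard⟩
  exact ⟨Aᵀ, hA.transpose, by rw [card_supp_transpose, hcard, add_comm, Nat.gcd_comm]⟩

lemma existsSparseDS_zero_left (m : ℕ) : ExistsSparseDS 0 m :=
  ⟨0, ⟨fun _ _ => le_rfl, fun _ => by simp, fun i => i.elim0⟩, by simp [supp]⟩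

lemma ExistsSparseDS.add_right {n k : ℕ} (hn : 0 < n) :
    ExistsSparseDS n k → ExistsSparseDS n (k + n) := by
  rintro ⟨B, hB, hcard⟩
  refine ⟨appendDiagonal B, hB.appendDiagonal, ?_⟩
  rw [card_supp_appendDiagonal, hcard, Nat.gcd_add_self_right]
  have := Nat.gcd_le_left k hn
  omega

theorem stmt0_general (n m : ℕ) :
    ∃ A : Matrix (Fin n) (Fin m) ℝ, DS n m A ∧ (supp A).card = n + m - Nat.gcd n m := by
  show ExistsSparseDS n m
  induction hs : n + m using Nat.strong_induction_on generalizing n m with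
  | _ s ih =>
  subst hs
  rcases Nat.eq_zero_or_pos n with rfl | hn
  · exact existsSparseDS_zero_left m
  rcases Nat.eq_zero_or_pos m with rfl | hm
  · exact (existsSparseDS_zero_left n).symm
  rcases le_total n m with hnm | hmn
  · obtain ⟨k, rfl⟩ : ∃ k, m = k + n := ⟨m - n, by omega⟩
    exact (ih (n + k) (by omega) n k rfl).add_right hn
  · obtain ⟨k, rfl⟩ : ∃ k, n = k + m := ⟨n - m, by omega⟩
    exact ((ih (m + k) (by omega) m k rfl).add_right hm).symm

theorem stmt0 (n m : ℕ) (hn : 1 < n) (hnm : n ≤ m) :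
    ∃ A : Matrix (Fin n) (Fin m) ℝ, DS n m A ∧ (supp A).card = n + m - Nat.gcd n m :=
  stmt0_general n m
end

section
/- For all integers n, m with 1 < n ≤ m, every n × m matrix with nonnegative real entries, all column sums equal to n and all row sums equal to m, has at least n + m - gcd(n, m) nonzero entries. -/
/-!
Let `G` be the bipartite graph on rows ⊕ columns whose edges are the support of `A`. A component
of `G` with `r` rows and `c` columns carries the total mass `r * m = c * n`, so `n / gcd n m`
divides `r`: every component contains at least `n / gcd n m` of the `n` rows, and `G` has at most
`gcd n m` components. A graph on `n + m` vertices with `k` components has at least `n + m - k`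
edges.
-/

open Finset

namespace SimpleGraph

variable {V : Type*} {G : SimpleGraph V} {u v x y : V}

lemma Walk.reachable_deleteEdges_singleton_or (p : G.Walk x y) :
    (G.deleteEdges {s(u, v)}).Reachable x y ∨ (G.deleteEdges {s(u, v)}).Reachable x u ∨
      (G.deleteEdges {s(u, v)}).Reachable x v := by
  induction p with
  | nil => exact Or.inl .rfl
  | @cons a b c hab p ih =>
    by_cases he : s(a, b) = s(u, v)
    · rcases Sym2.eq_iff.mp he with ⟨rfl, -⟩ | ⟨rfl, -⟩
      · exact Or.inr (Or.inl .rfl)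
      · exact Or.inr (Or.inr .rfl)
    · have hab' : (G.deleteEdges {s(u, v)}).Adj a b := by
        simpa [deleteEdges_adj, hab] using he
      exact ih.imp hab'.reachable.trans (Or.imp hab'.reachable.trans hab'.reachable.trans)

lemma Reachable.reachable_deleteEdges_singleton_or (h : G.Reachable x y) :
    (G.deleteEdges {s(u, v)}).Reachable x y ∨ (G.deleteEdges {s(u, v)}).Reachable x v ∨
      (G.deleteEdges {s(u, v)}).Reachable y v := by
  obtain ⟨p⟩ := h
  rcases p.reachable_deleteEdges_singleton_or (u := u) (v := v) with hxy | hxu | hxv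
  · exact Or.inl hxy
  · rcases p.reverse.reachable_deleteEdges_singleton_or (u := u) (v := v) with hyx | hyu | hyv
    · exact Or.inl hyx.symm
    · exact Or.inl (hxu.trans hyu.symm)
    · exact Or.inr (Or.inr hyv)
  · exact Or.inr (Or.inl hxv)

/-- Away from the component of `v`, the components of `G` minus the edge `uv` map injectively to
those of `G`. -/
lemma card_connectedComponent_deleteEdges_singleton_le [Finite V] (u v : V) :
    Nat.card (G.deleteEdges {s(u, v)}).ConnectedComponent ≤
      Nat.card G.ConnectedComponent + 1 := by
  classical
  set G' := G.deleteEdges {s(u, v)}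
  let f : G'.ConnectedComponent → G.ConnectedComponent ⊕ Unit := fun C =>
    if C = G'.connectedComponentMk v then .inr () else .inl (C.map (Hom.ofLE (deleteEdges_le _)))
  have hf : Function.Injective f := by
    intro C D hCD
    by_cases hC : C = G'.connectedComponentMk v <;> by_cases hD : D = G'.connectedComponentMk v
    · exact hC.trans hD.symm
    · simp [f, hC, hD] at hCD
    · simp [f, hC, hD] at hCD
    · induction C using ConnectedComponent.ind with | h x => ?_
      induction D using ConnectedComponent.ind with | h y => ?_
      simp only [f, if_neg hC, if_neg hD, Sum.inl.injEq, ConnectedComponent.eq] at hCD hC hD ⊢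
      have hxy : G.Reachable x y := ConnectedComponent.eq.mp hCD
      exact (hxy.reachable_deleteEdges_singleton_or (u := u)).resolve_right
        (not_or.mpr ⟨hC, hD⟩)
  simpa using Nat.card_le_card_of_injective f hf

theorem card_le_card_edgeSet_add_card_connectedComponent [Finite V] (G : SimpleGraph V) :
    Nat.card V ≤ Nat.card G.edgeSet + Nat.card G.ConnectedComponent := by
  induction hk : Nat.card G.edgeSet generalizing G with
  | zero =>
    have hG : G = ⊥ := by
      rw [← edgeSet_eq_empty, ← Set.ncard_eq_zero, ← Nat.card_coe_set_eq, hk]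
    subst hG
    have hmk : Function.Injective (⊥ : SimpleGraph V).connectedComponentMk := fun x y hxy =>
      reachable_bot.mp (ConnectedComponent.eq.mp hxy)
    simpa using Nat.card_le_card_of_injective _ hmk
  | succ k ih =>
    obtain ⟨e, he⟩ : G.edgeSet.Nonempty := by
      rw [← Set.ncard_pos, ← Nat.card_coe_set_eq, hk]; omega
    induction e using Sym2.ind with | h u v => ?_
    have hk' : Nat.card (G.deleteEdges {s(u, v)}).edgeSet = k := by
      rw [Nat.card_coe_set_eq, edgeSet_deleteEdges, Set.ncard_sdiff_singleton_of_mem he,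
        ← Nat.card_coe_set_eq, hk, Nat.add_sub_cancel]
    have := ih _ hk'
    have := card_connectedComponent_deleteEdges_singleton_le (G := G) u v
    omega

end SimpleGraph

open SimpleGraph

lemma Nat.div_gcd_le_of_mul_eq_mul {n m r c : ℕ} (h : r * m = c * n) (hrc : 0 < r + c) :
    n / n.gcd m ≤ r := by
  rcases Nat.eq_zero_or_pos n with rfl | hn
  · simp
  rcases Nat.eq_zero_or_pos r with rfl | hr
  · have : c * n = 0 := by simpa using h.symm
    exact absurd this (Nat.mul_ne_zero (by omega) hn.ne')
  have hg : 0 < n.gcd m := Nat.gcd_pos_of_pos_left m hn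
  have hdvd : n / n.gcd m ∣ r * (m / n.gcd m) := by
    rw [← Nat.mul_dvd_mul_iff_right hg, Nat.div_mul_cancel (Nat.gcd_dvd_left n m), mul_assoc,
      Nat.div_mul_cancel (Nat.gcd_dvd_right n m), h]
    exact dvd_mul_left n c
  exact Nat.le_of_dvd hr ((Nat.coprime_div_gcd_div_gcd hg).dvd_of_dvd_mul_right hdvd)

namespace Matrix

variable {ι κ R : Type*}

def supportGraph [Zero R] (A : Matrix ι κ R) : SimpleGraph (ι ⊕ κ) where
  Adj
    | .inl i, .inr j => A i j ≠ 0
    | .inr j, .inl i => A i j ≠ 0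
    | _, _ => False
  symm := ⟨by rintro (i | j) (i' | j') h <;> exact h⟩
  loopless := ⟨by rintro (i | j) h <;> exact h⟩

section supportGraph

variable [Zero R] {A : Matrix ι κ R}

@[simp]
lemma supportGraph_adj_inl_inr {i : ι} {j : κ} :
    A.supportGraph.Adj (.inl i) (.inr j) ↔ A i j ≠ 0 := .rfl

lemma connectedComponentMk_inl_eq_inr {i : ι} {j : κ} (h : A i j ≠ 0) :
    A.supportGraph.connectedComponentMk (.inl i) = A.supportGraph.connectedComponentMk (.inr j) :=
  ConnectedComponent.sound (supportGraph_adj_inl_inr.mpr h).reachable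

lemma card_edgeSet_supportGraph [Fintype ι] [Fintype κ] [DecidableEq R] (A : Matrix ι κ R) :
    Nat.card A.supportGraph.edgeSet = #{p : ι × κ | A p.1 p.2 ≠ 0} := by
  rw [← Nat.card_eq_finsetCard]
  let f : {p // p ∈ univ.filter fun p : ι × κ => A p.1 p.2 ≠ 0} → A.supportGraph.edgeSet :=
    fun p => ⟨s(.inl p.1.1, .inr p.1.2), (mem_filter.mp p.2).2⟩
  refine (Nat.card_eq_of_bijective f ⟨?_, ?_⟩).symm
  · rintro ⟨⟨i, j⟩, _⟩ ⟨⟨i', j'⟩, _⟩ h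
    simpa [f, Sym2.eq_iff] using congrArg Subtype.val h
  · rintro ⟨e, he⟩
    induction e using Sym2.ind with | h x y => ?_
    rcases x with i | j <;> rcases y with i' | j'
    · exact he.elim
    · exact ⟨⟨(i, j'), mem_filter.mpr ⟨mem_univ _, he⟩⟩, rfl⟩
    · exact ⟨⟨(i', j), mem_filter.mpr ⟨mem_univ _, he⟩⟩, Subtype.ext Sym2.eq_swap⟩
    · exact he.elim

end supportGraph

lemma sum_row_sums_eq_sum_col_sums [Fintype ι] [Fintype κ] [AddCommMonoid R] (A : Matrix ι κ R)
    {s : Finset ι} {t : Finset κ} (h : ∀ i j, A i j ≠ 0 → (i ∈ s ↔ j ∈ t)) :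
    ∑ i ∈ s, ∑ j, A i j = ∑ j ∈ t, ∑ i, A i j := by
  have hs : ∀ i ∈ s, ∑ j, A i j = ∑ j ∈ t, A i j := fun i hi =>
    (sum_subset (subset_univ t) fun j _ hj => by_contra fun hij => hj ((h i j hij).mp hi)).symm
  have ht : ∀ j ∈ t, ∑ i, A i j = ∑ i ∈ s, A i j := fun j hj =>
    (sum_subset (subset_univ s) fun i _ hi => by_contra fun hij => hi ((h i j hij).mpr hj)).symm
  rw [sum_congr rfl hs, sum_congr rfl ht, sum_comm]

section balance

variable [Fintype ι] [Fintype κ] [Semiring R] [CharZero R] {A : Matrix ι κ R} {n m : ℕ}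

open Classical in
lemma card_rows_mul_eq_card_cols_mul (hrow : ∀ i, ∑ j, A i j = m)
    (hcol : ∀ j, ∑ i, A i j = n) (C : A.supportGraph.ConnectedComponent) :
    #{i | A.supportGraph.connectedComponentMk (.inl i) = C} * m =
      #{j | A.supportGraph.connectedComponentMk (.inr j) = C} * n := by
  have h := A.sum_row_sums_eq_sum_col_sums
    (s := {i | A.supportGraph.connectedComponentMk (.inl i) = C})
    (t := {j | A.supportGraph.connectedComponentMk (.inr j) = C})
    (fun i j hij => by simp [connectedComponentMk_inl_eq_inr hij])
  simp only [hrow, hcol, sum_const, nsmul_eq_mul] at h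
  exact_mod_cast h

open Classical in
lemma div_gcd_le_card_rows (hrow : ∀ i, ∑ j, A i j = m) (hcol : ∀ j, ∑ i, A i j = n)
    (C : A.supportGraph.ConnectedComponent) :
    n / n.gcd m ≤ #{i | A.supportGraph.connectedComponentMk (.inl i) = C} := by
  refine Nat.div_gcd_le_of_mul_eq_mul (card_rows_mul_eq_card_cols_mul hrow hcol C) ?_
  induction C using ConnectedComponent.ind with | h x => ?_
  rcases x with i | j
  · exact Nat.add_pos_left (card_pos.mpr ⟨i, by simp⟩) _
  · exact Nat.add_pos_right _ (card_pos.mpr ⟨j, by simp⟩)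

lemma card_connectedComponent_mul_div_gcd_le (hrow : ∀ i, ∑ j, A i j = m)
    (hcol : ∀ j, ∑ i, A i j = n) :
    Nat.card A.supportGraph.ConnectedComponent * (n / n.gcd m) ≤ Fintype.card ι := by
  classical
  have := Fintype.ofFinite A.supportGraph.ConnectedComponent
  rw [Nat.card_eq_fintype_card, ← card_univ, ← card_univ (α := ι),
    card_eq_sum_card_fiberwise (f := fun i => A.supportGraph.connectedComponentMk (.inl i))
      (t := univ) fun _ _ => mem_univ _]
  exact card_nsmul_le_sum _ _ _ fun C _ => div_gcd_le_card_rows hrow hcol C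

end balance

end Matrix

theorem stmt1_general (n m : ℕ)
    (A : Matrix (Fin n) (Fin m) ℝ) (hA : DS n m A) :
    n + m - Nat.gcd n m ≤ (supp A).card := by
  obtain ⟨-, hcol, hrow⟩ := hA
  rcases Nat.eq_zero_or_pos n with rfl | hn
  · simp
  have hforest := A.supportGraph.card_le_card_edgeSet_add_card_connectedComponent
  rw [A.card_edgeSet_supportGraph, Nat.card_sum, Nat.card_fin, Nat.card_fin] at hforest
  have hcomp : Nat.card A.supportGraph.ConnectedComponent ≤ n.gcd m := by
    have h := Matrix.card_connectedComponent_mul_div_gcd_le hrow hcol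
    have hdiv : 0 < n / n.gcd m := Nat.div_pos (Nat.gcd_le_left m hn) (Nat.gcd_pos_of_pos_left m hn)
    rw [Fintype.card_fin] at h
    refine Nat.le_of_mul_le_mul_right ?_ hdiv
    rwa [Nat.mul_div_cancel' (Nat.gcd_dvd_left n m)]
  exact Nat.sub_le_of_le_add (hforest.trans (Nat.add_le_add_left hcomp _))

theorem stmt1 (n m : ℕ) (hn : 1 < n) (hnm : n ≤ m)
    (A : Matrix (Fin n) (Fin m) ℝ) (hA : DS n m A) :
    n + m - Nat.gcd n m ≤ (supp A).card :=
  stmt1_general n m A hA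
end

section
/- A matrix M ∈ M(n,m) is extremal if and only if there is no matrix B ∈ M(n,m) with supp B strictly contained in supp M. -/
open Finset

/-!
Both directions move along lines inside the affine space of matrices with the prescribed line
sums, where only nonnegativity can fail. If `supp B ⊆ supp M`, then `(1 + ε) M - ε B` stays
nonnegative for small `ε > 0`, and `M` lies strictly between it and `B`; extremality forces
`B = M`. Conversely, if `M = t A + (1 - t) B` with `A ≠ M`, then `supp A ⊆ supp M`, and walking
from `M` through `A` until the first entry vanishes gives a matrix in `M(n,m)` with strictly
smaller support.
-/

open Filter Topology

section Perturbation

variable {α : Type*} {f g : α → ℝ}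

lemma exists_pos_forall_nonneg_one_add_mul_sub [Finite α] (hf : ∀ x, 0 ≤ f x)
    (hfg : ∀ x, f x = 0 → g x = 0) : ∃ ε > 0, ∀ x, 0 ≤ (1 + ε) * f x - ε * g x := by
  have hnhds : ∀ᶠ ε in 𝓝 (0 : ℝ), ∀ x, 0 ≤ (1 + ε) * f x - ε * g x := by
    refine eventually_all.2 fun x => ?_
    rcases (hf x).eq_or_lt with h | h
    · simp [← h, hfg x h.symm]
    · have hcont : Continuous fun ε : ℝ => (1 + ε) * f x - ε * g x := by fun_prop
      exact (hcont.tendsto' 0 (f x) (by simp)).eventually (eventually_ge_nhds h)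
  exact ((hnhds.filter_mono (nhdsWithin_le_nhds (s := Set.Ioi 0))).and
    self_mem_nhdsWithin).exists.imp fun ε h => ⟨h.2, h.1⟩

lemma exists_forall_nonneg_and_eq_zero [Fintype α] (hf : ∀ x, 0 ≤ f x) (hg : ∀ x, 0 ≤ g x)
    (hlt : ∃ x, g x < f x) :
    ∃ s, (∀ x, 0 ≤ (1 - s) * f x + s * g x) ∧ ∃ x, f x ≠ 0 ∧ (1 - s) * f x + s * g x = 0 := by
  set T := univ.filter fun x => g x < f x
  obtain ⟨x₀, hx₀T, hmin⟩ := T.exists_min_image (fun x => f x / (f x - g x))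
    (by simpa [T, Finset.Nonempty] using hlt)
  have hx₀ : g x₀ < f x₀ := (mem_filter.1 hx₀T).2
  have hd₀ : 0 < f x₀ - g x₀ := sub_pos.2 hx₀
  refine ⟨f x₀ / (f x₀ - g x₀), fun x => ?_, x₀, (lt_of_le_of_lt (hg x₀) hx₀).ne', ?_⟩
  · rcases lt_or_ge (g x) (f x) with hx | hx
    · have hle := (div_le_div_iff₀ hd₀ (sub_pos.2 hx)).1 (hmin x (by simp [T, hx]))
      field_simp
      nlinarith
    · have hs : 0 ≤ f x₀ / (f x₀ - g x₀) := div_nonneg (hf x₀) hd₀.le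
      nlinarith [hf x]
  · field_simp
    ring

end Perturbation

section DoublyStochastic

variable {n m : ℕ} {A B M : Matrix (Fin n) (Fin m) ℝ}

lemma mem_supp_iff {p : Fin n × Fin m} : p ∈ supp A ↔ A p.1 p.2 ≠ 0 := by
  simp [supp]

lemma supp_subset_supp_iff : supp A ⊆ supp B ↔ ∀ i j, B i j = 0 → A i j = 0 := by
  simp only [subset_iff, mem_supp_iff, Prod.forall]
  exact forall₂_congr fun i j => not_imp_not

lemma DS.smul_add_smul (hA : DS n m A) (hB : DS n m B) {a b : ℝ} (hab : a + b = 1)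
    (hnonneg : ∀ i j, 0 ≤ a * A i j + b * B i j) : DS n m (a • A + b • B) := by
  refine ⟨hnonneg, fun j => ?_, fun i => ?_⟩
  · simp only [Matrix.add_apply, Matrix.smul_apply, smul_eq_mul, sum_add_distrib, ← mul_sum,
      hA.2.1 j, hB.2.1 j, ← add_mul, hab, one_mul]
  · simp only [Matrix.add_apply, Matrix.smul_apply, smul_eq_mul, sum_add_distrib, ← mul_sum,
      hA.2.2 i, hB.2.2 i, ← add_mul, hab, one_mul]

lemma DS.exists_lt_of_ne (hA : DS n m A) (hB : DS n m B) (hne : A ≠ B) :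
    ∃ i j, A i j < B i j := by
  by_contra! hle
  refine hne (Matrix.ext fun i j => ?_)
  have hrow : ∑ j, B i j = ∑ j, A i j := by rw [hA.2.2 i, hB.2.2 i]
  exact ((sum_eq_sum_iff_of_le fun j _ => hle i j).1 hrow j (mem_univ j)).symm

lemma IsExtremal.eq_of_supp_subset (hM : IsExtremal M) (hB : DS n m B)
    (hsupp : supp B ⊆ supp M) : B = M := by
  obtain ⟨ε, hε, hnonneg⟩ := exists_pos_forall_nonneg_one_add_mul_sub
    (f := fun p : Fin n × Fin m => M p.1 p.2) (g := fun p => B p.1 p.2)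
    (fun p => hM.1.1 p.1 p.2) (fun p => supp_subset_supp_iff.1 hsupp p.1 p.2)
  have hA : DS n m ((1 + ε) • M + (-ε) • B) :=
    hM.1.smul_add_smul hB (by ring) fun i j => by simpa [← sub_eq_add_neg] using hnonneg (i, j)
  refine (hM.2 _ B (1 / (1 + ε)) hA hB (by positivity) ?_ ?_).2
  · rw [div_lt_one (by linarith)]; linarith
  · ext i j
    simp only [Matrix.add_apply, Matrix.smul_apply, smul_eq_mul]
    field_simp
    ring

lemma IsExtremal.not_exists_supp_ssubset (hM : IsExtremal M) :
    ¬ ∃ B, DS n m B ∧ supp B ⊂ supp M := by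
  rintro ⟨B, hB, hssub⟩
  exact hssub.ne (congrArg supp (hM.eq_of_supp_subset hB hssub.subset))

lemma exists_supp_ssubset_of_supp_subset (hM : DS n m M) (hA : DS n m A)
    (hsupp : supp A ⊆ supp M) (hne : A ≠ M) : ∃ C, DS n m C ∧ supp C ⊂ supp M := by
  obtain ⟨i, j, hlt⟩ := hA.exists_lt_of_ne hM hne
  obtain ⟨s, hnonneg, p, hMp, hCp⟩ := exists_forall_nonneg_and_eq_zero
    (f := fun p : Fin n × Fin m => M p.1 p.2) (g := fun p => A p.1 p.2)
    (fun p => hM.1 p.1 p.2) (fun p => hA.1 p.1 p.2) ⟨(i, j), hlt⟩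
  refine ⟨(1 - s) • M + s • A, hM.smul_add_smul hA (by ring) fun i j => hnonneg (i, j), ?_⟩
  have hCM : supp ((1 - s) • M + s • A) ⊆ supp M := supp_subset_supp_iff.2 fun i j hMij => by
    simp [hMij, supp_subset_supp_iff.1 hsupp i j hMij]
  refine (ssubset_iff_of_subset hCM).2 ⟨p, mem_supp_iff.2 hMp, ?_⟩
  simpa [mem_supp_iff] using hCp

lemma supp_subset_of_eq_smul_add_smul (hA : ∀ i j, 0 ≤ A i j) (hB : ∀ i j, 0 ≤ B i j)
    {t : ℝ} (ht₀ : 0 < t) (ht₁ : t < 1) (h : M = t • A + (1 - t) • B) : supp A ⊆ supp M := by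
  refine supp_subset_supp_iff.2 fun i j hMij => ?_
  have hsum : t * A i j + (1 - t) * B i j = 0 := by simpa [h] using hMij
  have hA' := mul_nonneg ht₀.le (hA i j)
  have hB' := mul_nonneg (sub_pos.2 ht₁).le (hB i j)
  exact (mul_eq_zero.1 ((add_eq_zero_iff_of_nonneg hA' hB').1 hsum).1).resolve_left ht₀.ne'

lemma isExtremal_of_not_exists_supp_ssubset (hM : DS n m M)
    (h : ¬ ∃ B, DS n m B ∧ supp B ⊂ supp M) : IsExtremal M := by
  refine ⟨hM, fun A B t hA hB ht₀ ht₁ hMAB => ?_⟩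
  have hAM : A = M := by
    by_contra hne
    exact h (exists_supp_ssubset_of_supp_subset hM hA
      (supp_subset_of_eq_smul_add_smul hA.1 hB.1 ht₀ ht₁ hMAB) hne)
  refine ⟨hAM, ?_⟩
  subst hAM
  have h1t : (1 - t) ≠ 0 := (sub_pos.2 ht₁).ne'
  rw [← sub_eq_iff_eq_add'] at hMAB
  exact smul_right_injective _ h1t (show (1 - t) • B = (1 - t) • A by
    rw [← hMAB, sub_smul, one_smul])

end DoublyStochastic

theorem stmt7 (n m : ℕ) (M : Matrix (Fin n) (Fin m) ℝ) (hM : DS n m M) :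
    IsExtremal M ↔ ¬ ∃ B : Matrix (Fin n) (Fin m) ℝ, DS n m B ∧ supp B ⊂ supp M :=
  ⟨IsExtremal.not_exists_supp_ssubset, isExtremal_of_not_exists_supp_ssubset hM⟩
end

section
/- Every matrix in M(n,m) whose support has minimum cardinality S(n,m) is an extreme point of the convex set M(n,m). -/
open Finset

/-! A matrix `A ≠ M` of `M(n,m)` vanishing wherever `M` does gives a line through `M` and `A`
inside the affine space of matrices with the prescribed line sums. Moving along it from `M`
towards `A` and beyond, until the first entry of the support of `M` hits zero, produces a matrix
of `M(n,m)` with strictly smaller support, so `M` cannot have minimal support. -/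

lemma exists_lt_of_sum_eq_of_ne {ι : Type*} [Fintype ι] {f g : ι → ℝ}
    (hsum : ∑ i, f i = ∑ i, g i) (hne : f ≠ g) : ∃ i, g i < f i := by
  by_contra! hle
  exact hne (funext fun i => (sum_eq_sum_iff_of_le fun i _ => hle i).mp hsum i (mem_univ i))

/-- `t` is the largest step keeping all entries nonnegative; it kills the minimizing entry. -/
lemma exists_nonneg_filter_ne_zero_ssubset {ι : Type*} [Fintype ι] {f g : ι → ℝ}
    (hf : ∀ i, 0 ≤ f i) (hzero : ∀ i, f i = 0 → g i = 0) (hlt : ∃ i, g i < f i) :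
    ∃ t : ℝ, (∀ i, 0 ≤ f i + t * (g i - f i)) ∧
      univ.filter (fun i => f i + t * (g i - f i) ≠ 0) ⊂ univ.filter (fun i => f i ≠ 0) := by
  obtain ⟨i₀, hi₀, hmin⟩ := (univ.filter fun i => g i < f i).exists_min_image
    (fun i => f i / (f i - g i)) (by simpa [Finset.Nonempty] using hlt)
  simp only [mem_filter, mem_univ, true_and] at hi₀ hmin
  have hgap : 0 < f i₀ - g i₀ := sub_pos.mpr hi₀
  refine ⟨f i₀ / (f i₀ - g i₀), fun i => ?_, ?_, ?_⟩
  · rcases lt_or_ge (g i) (f i) with hgf | hfg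
    · have hstep := (le_div_iff₀ (sub_pos.mpr hgf)).mp (hmin i hgf)
      nlinarith
    · have := div_nonneg (hf i₀) hgap.le
      nlinarith [hf i]
  · intro i
    simp only [mem_filter, mem_univ, true_and]
    intro hC hfi
    exact hC (by simp [hfi, hzero i hfi])
  · intro hsub
    have hfi₀ : f i₀ ≠ 0 := fun h => by linarith [hzero i₀ h]
    have := hsub (by simpa using hfi₀)
    simp only [mem_filter, mem_univ, true_and] at this
    apply this
    field_simp
    ring

lemma DS.add_smul_sub {n m : ℕ} {M A : Matrix (Fin n) (Fin m) ℝ} (hM : DS n m M)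
    (hA : DS n m A) (t : ℝ) (hnonneg : ∀ i j, 0 ≤ M i j + t * (A i j - M i j)) :
    DS n m (M + t • (A - M)) := by
  refine ⟨fun i j => by simpa using hnonneg i j, fun j => ?_, fun i => ?_⟩
  · simp [sum_add_distrib, ← mul_sum, sum_sub_distrib, hM.2.1 j, hA.2.1 j]
  · simp [sum_add_distrib, ← mul_sum, sum_sub_distrib, hM.2.2 i, hA.2.2 i]

lemma S_le_card_supp {n m : ℕ} {A : Matrix (Fin n) (Fin m) ℝ} (hA : DS n m A) :
    S n m ≤ (supp A).card :=
  Nat.sInf_le ⟨A, hA, rfl⟩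

lemma DS.eq_of_card_supp_eq_S {n m : ℕ} {M A : Matrix (Fin n) (Fin m) ℝ} (hM : DS n m M)
    (hmin : (supp M).card = S n m) (hA : DS n m A) (hzero : ∀ i j, M i j = 0 → A i j = 0) :
    A = M := by
  by_contra hne
  obtain ⟨i, hrow⟩ : ∃ i, M i ≠ A i := by
    by_contra! h
    exact hne (funext fun i => (h i).symm)
  obtain ⟨t, hnonneg, hssubset⟩ := exists_nonneg_filter_ne_zero_ssubset
    (f := fun p : Fin n × Fin m => M p.1 p.2) (g := fun p => A p.1 p.2)
    (fun p => hM.1 p.1 p.2) (fun p => hzero p.1 p.2) <| by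
      obtain ⟨j, hj⟩ := exists_lt_of_sum_eq_of_ne ((hM.2.2 i).trans (hA.2.2 i).symm) hrow
      exact ⟨(i, j), hj⟩
  have hC := hM.add_smul_sub hA t fun i j => hnonneg (i, j)
  have hcard : (supp (M + t • (A - M))).card < (supp M).card := by
    refine card_lt_card (lt_of_eq_of_lt ?_ hssubset)
    ext p
    simp only [supp, mem_filter]
    simp
  linarith [S_le_card_supp hC]

lemma eq_zero_of_convex_combination_eq_zero {a b t : ℝ} (ha : 0 ≤ a) (hb : 0 ≤ b)
    (ht₀ : 0 < t) (ht₁ : t < 1) (h : t * a + (1 - t) * b = 0) : a = 0 ∧ b = 0 := by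
  obtain ⟨hta, htb⟩ := (add_eq_zero_iff_of_nonneg (by positivity)
    (mul_nonneg (sub_nonneg.mpr ht₁.le) hb)).mp h
  exact ⟨(mul_eq_zero.mp hta).resolve_left ht₀.ne',
    (mul_eq_zero.mp htb).resolve_left (sub_ne_zero.mpr ht₁.ne')⟩

theorem stmt8 (n m : ℕ) (M : Matrix (Fin n) (Fin m) ℝ)
    (hM : DS n m M) (hmin : (supp M).card = S n m) :
    IsExtremal M := by
  refine ⟨hM, fun A B t hA hB ht₀ ht₁ hMAB => ?_⟩
  have hzero : ∀ i j, M i j = 0 → A i j = 0 ∧ B i j = 0 := fun i j hMij =>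
    eq_zero_of_convex_combination_eq_zero (hA.1 i j) (hB.1 i j) ht₀ ht₁ <| by
      simpa [hMij] using (congrFun (congrFun hMAB i) j).symm
  exact ⟨hM.eq_of_card_supp_eq_S hmin hA fun i j h => (hzero i j h).1,
    hM.eq_of_card_supp_eq_S hmin hB fun i j h => (hzero i j h).2⟩
end

section
/- Let n, m be coprime integers with 1 < n ≤ m. Then M ∈ M(n,m) is extremal if and only if |supp M| = n + m - 1. -/
/-!
Let `T = supp M`. A matrix `D` supported on `T` with zero row and column sums is exactly a
perturbation direction for `M`: `M ± ε D` stays in `M(n,m)` for small `ε`, so `M` is extremal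
iff no such `D ≠ 0` exists, i.e. iff the incidence matrix of the bipartite graph `T` on
rows ⊔ columns has trivial kernel, i.e. iff its rank equals `|T|`. That rank is `n + m - 1`
because the graph is connected: a set `I` of rows and `J` of columns closed under the edges
of `T` carries total mass `|I| m = |J| n`, which coprimality forces to be `0` or `n m`.
-/

open Finset

open Filter Topology
open scoped Matrix

variable {n m : ℕ} {M A B D : Matrix (Fin n) (Fin m) ℝ}

lemma mem_supp {i : Fin n} {j : Fin m} :
    (i, j) ∈ supp M ↔ M i j ≠ 0 := by
  simp [supp]

def HasZeroMargins (D : Matrix (Fin n) (Fin m) ℝ) : Prop :=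
  (∀ i, ∑ j, D i j = 0) ∧ ∀ j, ∑ i, D i j = 0

lemma exists_pos_forall_mul_abs_le {ι : Type*} [Finite ι] {f g : ι → ℝ}
    (hf : ∀ x, 0 ≤ f x) (hg : ∀ x, f x = 0 → g x = 0) : ∃ ε > 0, ∀ x, ε * |g x| ≤ f x := by
  have hev : ∀ᶠ ε in 𝓝[>] (0 : ℝ), ∀ x, ε * |g x| ≤ f x := by
    refine eventually_all.2 fun x => ?_
    rcases (hf x).eq_or_lt with h | h
    · exact Eventually.of_forall fun ε => by simp [hg x h.symm, ← h]
    · have hlim : Tendsto (fun ε : ℝ => ε * |g x|) (𝓝 0) (𝓝 0) := by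
        simpa using (tendsto_id (x := 𝓝 (0 : ℝ))).mul_const |g x|
      exact nhdsWithin_le_nhds (hlim.eventually (ge_mem_nhds h))
  obtain ⟨ε, hε, hεpos⟩ := (hev.and self_mem_nhdsWithin).exists
  exact ⟨ε, hεpos, hε⟩

namespace DS

lemma add_smul_of_hasZeroMargins (hM : DS n m M) (hD : HasZeroMargins D) {ε : ℝ}
    (hpos : ∀ i j, 0 ≤ M i j + ε * D i j) : DS n m (M + ε • D) := by
  refine ⟨hpos, fun j => ?_, fun i => ?_⟩
  · simp [sum_add_distrib, ← mul_sum, hD.2 j, hM.2.1 j]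
  · simp [sum_add_distrib, ← mul_sum, hD.1 i, hM.2.2 i]

lemma hasZeroMargins_sub (hA : DS n m A) (hB : DS n m B) : HasZeroMargins (A - B) :=
  ⟨fun i => by simp [sum_sub_distrib, hA.2.2 i, hB.2.2 i],
    fun j => by simp [sum_sub_distrib, hA.2.1 j, hB.2.1 j]⟩

lemma isExtremal_of_forall (hM : DS n m M)
    (h : ∀ D, (∀ i j, M i j = 0 → D i j = 0) → HasZeroMargins D → D = 0) :
    IsExtremal M := by
  refine ⟨hM, fun A B t hA hB ht ht1 hMAB => ?_⟩
  have hMij : ∀ i j, M i j = t * A i j + (1 - t) * B i j := fun i j => by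
    simp [hMAB]
  have hAB : A = B := sub_eq_zero.1 <| h _ (fun i j hij => by
    have hA0 := hA.1 i j
    have hB0 := hB.1 i j
    have : A i j = 0 ∧ B i j = 0 := by
      constructor <;> nlinarith [hMij i j]
    simp [this.1, this.2]) (hasZeroMargins_sub hA hB)
  subst hAB
  have hAM : A = M := by
    rw [hMAB, ← add_smul]
    simp
  exact ⟨hAM, hAM⟩

end DS

lemma IsExtremal.eq_zero (hM : IsExtremal M) (hsupp : ∀ i j, M i j = 0 → D i j = 0)
    (hD : HasZeroMargins D) : D = 0 := by
  obtain ⟨ε, hε, hεD⟩ := exists_pos_forall_mul_abs_le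
    (f := fun p : Fin n × Fin m => M p.1 p.2) (g := fun p => D p.1 p.2)
    (fun p => hM.1.1 p.1 p.2) fun p => hsupp p.1 p.2
  have hpos : ∀ δ, |δ| ≤ ε → ∀ i j, 0 ≤ M i j + δ * D i j := fun δ hδ i j => by
    have := hεD (i, j)
    have : |δ * D i j| ≤ ε * |D i j| := by
      rw [abs_mul]
      exact mul_le_mul_of_nonneg_right hδ (abs_nonneg _)
    linarith [neg_abs_le (δ * D i j)]
  have hplus := hM.1.add_smul_of_hasZeroMargins hD (hpos ε (abs_of_pos hε).le)
  have hminus := hM.1.add_smul_of_hasZeroMargins hD (hpos (-ε) (by simp [abs_of_pos hε]))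
  have hmid : M = (1 / 2 : ℝ) • (M + ε • D) + (1 - 1 / 2 : ℝ) • (M + (-ε) • D) := by
    ext i j
    simp only [Matrix.add_apply, Matrix.smul_apply, smul_eq_mul]
    ring
  have := (hM.2 _ _ _ hplus hminus (by norm_num) (by norm_num) hmid).1
  rw [add_eq_left, smul_eq_zero] at this
  exact this.resolve_left hε.ne'

lemma DS.isExtremal_iff (hM : DS n m M) :
    IsExtremal M ↔ ∀ D, (∀ i j, M i j = 0 → D i j = 0) → HasZeroMargins D → D = 0 :=
  ⟨fun h _ => h.eq_zero, hM.isExtremal_of_forall⟩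

namespace DS

lemma card_mul_eq_card_mul (hM : DS n m M) {I : Finset (Fin n)} {J : Finset (Fin m)}
    (hIJ : ∀ i j, M i j ≠ 0 → (i ∈ I ↔ j ∈ J)) : #I * m = #J * n := by
  have hrow : ∀ i ∈ I, ∑ j ∈ J, M i j = m := fun i hi => by
    rw [← hM.2.2 i]
    refine sum_subset (subset_univ J) fun j _ hj => ?_
    by_contra hne
    exact hj ((hIJ i j hne).1 hi)
  have hcol : ∀ j ∈ J, ∑ i ∈ I, M i j = n := fun j hj => by
    rw [← hM.2.1 j]
    refine sum_subset (subset_univ I) fun i _ hi => ?_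
    by_contra hne
    exact hi ((hIJ i j hne).2 hj)
  have hmass : (#I * m : ℝ) = #J * n := by
    calc (#I * m : ℝ) = ∑ i ∈ I, ∑ j ∈ J, M i j := by simp [sum_congr rfl hrow]
      _ = ∑ j ∈ J, ∑ i ∈ I, M i j := sum_comm
      _ = #J * n := by simp [sum_congr rfl hcol]
  exact_mod_cast hmass

lemma eq_univ_of_forall_mem_iff (hco : Nat.Coprime n m) (hM : DS n m M) {I : Finset (Fin n)}
    {J : Finset (Fin m)} (hI : I.Nonempty) (hIJ : ∀ i j, M i j ≠ 0 → (i ∈ I ↔ j ∈ J)) :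
    I = univ ∧ J = univ := by
  have hmass := hM.card_mul_eq_card_mul hIJ
  have hIn : #I = n := by
    refine le_antisymm (by simpa using card_le_univ I) (Nat.le_of_dvd hI.card_pos ?_)
    exact hco.dvd_of_dvd_mul_right ⟨#J, by rw [hmass, mul_comm]⟩
  have hJm : #J = m := by
    refine Nat.eq_of_mul_eq_mul_right hI.card_pos ?_
    rw [hIn, ← hmass, hIn, mul_comm]
  exact ⟨eq_univ_of_card I (by simpa using hIn), eq_univ_of_card J (by simpa using hJm)⟩

lemma exists_eq_of_add_eq_zero (hn : 0 < n) (hco : Nat.Coprime n m) (hM : DS n m M)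
    {u : Fin n → ℝ} {v : Fin m → ℝ} (huv : ∀ i j, M i j ≠ 0 → u i + v j = 0) :
    ∃ a, (∀ i, u i = a) ∧ ∀ j, v j = -a := by
  let i₀ : Fin n := ⟨0, hn⟩
  obtain ⟨hI, hJ⟩ := hM.eq_univ_of_forall_mem_iff hco (I := {i | u i = u i₀})
    (J := {j | v j = -u i₀}) ⟨i₀, by simp⟩ fun i j hij => by
      have := huv i j hij
      simp only [mem_filter, mem_univ, true_and]
      constructor <;> intro <;> linarith
  refine ⟨u i₀, fun i => ?_, fun j => ?_⟩
  · simpa using (eq_univ_iff_forall.1 hI) i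
  · simpa using (eq_univ_iff_forall.1 hJ) j

end DS

lemma Matrix.rank_add_finrank_ker {ι κ K : Type*} [Field K] [Fintype κ] (A : Matrix ι κ K) :
    A.rank + Module.finrank K (LinearMap.ker A.mulVecLin) = Fintype.card κ := by
  have := LinearMap.finrank_range_add_finrank_ker A.mulVecLin
  rwa [Module.finrank_fintype_fun_eq_card] at this

def incidence (T : Finset (Fin n × Fin m)) : Matrix (Fin n ⊕ Fin m) T ℝ :=
  fun v p =>
    Sum.elim (fun i => if p.1.1 = i then 1 else 0) (fun j => if p.1.2 = j then 1 else 0) v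

lemma incidence_mulVec {T : Finset (Fin n × Fin m)} (hD : ∀ i j, (i, j) ∉ T → D i j = 0) :
    incidence T *ᵥ (fun p => D p.1.1 p.1.2) =
      Sum.elim (fun i => ∑ j, D i j) (fun j => ∑ i, D i j) := by
  have hT : ∀ f : Fin n × Fin m → ℝ, (∀ p ∉ T, f p = 0) →
      ∑ p : T, f p = ∑ i, ∑ j, f (i, j) := fun f hf => by
    rw [sum_coe_sort T f, sum_subset (subset_univ T) fun p _ hp => hf p hp, Fintype.sum_prod_type]
  funext v
  cases v with
  | inl i =>
    simp only [Matrix.mulVec, dotProduct, incidence, Sum.elim_inl, ite_mul, one_mul, zero_mul]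
    rw [hT (fun p => if p.1 = i then D p.1 p.2 else 0) fun p hp => by simp [hD p.1 p.2 hp]]
    simp
  | inr j =>
    simp only [Matrix.mulVec, dotProduct, incidence, Sum.elim_inr, ite_mul, one_mul, zero_mul]
    rw [hT (fun p => if p.2 = j then D p.1 p.2 else 0) fun p hp => by simp [hD p.1 p.2 hp],
      sum_comm]
    simp

lemma incidence_transpose_mulVec (T : Finset (Fin n × Fin m)) (w : Fin n ⊕ Fin m → ℝ) :
    (incidence T)ᵀ *ᵥ w = fun p => w (Sum.inl p.1.1) + w (Sum.inr p.1.2) := by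
  funext p
  simp [Matrix.mulVec, dotProduct, incidence, Fintype.sum_sum_type, ite_mul]

lemma ker_incidence_eq_bot_iff (T : Finset (Fin n × Fin m)) :
    LinearMap.ker (incidence T).mulVecLin = ⊥ ↔
      ∀ D : Matrix (Fin n) (Fin m) ℝ, (∀ i j, (i, j) ∉ T → D i j = 0) → HasZeroMargins D →
        D = 0 := by
  rw [Matrix.ker_mulVecLin_eq_bot_iff]
  constructor
  · intro h D hD hDm
    have hzero := h _ <| (incidence_mulVec hD).trans <| funext fun v => by
      cases v <;> simp [hDm.1, hDm.2]
    ext i j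
    by_cases hij : (i, j) ∈ T
    · exact congrFun hzero ⟨(i, j), hij⟩
    · exact hD i j hij
  · intro h x hx
    let D : Matrix (Fin n) (Fin m) ℝ := fun i j =>
      if hij : (i, j) ∈ T then x ⟨(i, j), hij⟩ else 0
    have hD : ∀ i j, (i, j) ∉ T → D i j = 0 := fun i j hij => dif_neg hij
    have hxD : (fun p : T => D p.1.1 p.1.2) = x := funext fun p => dif_pos p.2
    rw [← hxD] at hx ⊢
    rw [incidence_mulVec hD] at hx
    have hD0 := h D hD ⟨fun i => congrFun hx (Sum.inl i), fun j => congrFun hx (Sum.inr j)⟩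
    simp only [hD0, Matrix.zero_apply]
    rfl

lemma DS.rank_incidence_supp (hn : 0 < n) (hco : Nat.Coprime n m) (hM : DS n m M) :
    (incidence (supp M)).rank = n + m - 1 := by
  let w₀ : Fin n ⊕ Fin m → ℝ := Sum.elim 1 (-1)
  have hker : LinearMap.ker (incidence (supp M))ᵀ.mulVecLin = Submodule.span ℝ {w₀} := by
    refine le_antisymm (fun w hw => ?_) ?_
    · rw [LinearMap.mem_ker, Matrix.mulVecLin_apply, incidence_transpose_mulVec] at hw
      obtain ⟨a, hu, hv⟩ := hM.exists_eq_of_add_eq_zero hn hco (u := fun i => w (Sum.inl i))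
        (v := fun j => w (Sum.inr j)) fun i j hij => congrFun hw ⟨(i, j), mem_supp.2 hij⟩
      refine Submodule.mem_span_singleton.2 ⟨a, funext fun v => ?_⟩
      cases v <;> simp [w₀, hu, hv]
    · rw [Submodule.span_le, Set.singleton_subset_iff, SetLike.mem_coe, LinearMap.mem_ker,
        Matrix.mulVecLin_apply, incidence_transpose_mulVec]
      funext p
      simp [w₀]
  have hw₀ : w₀ ≠ 0 := fun h => by simpa [w₀] using congrFun h (Sum.inl ⟨0, hn⟩)
  have := (incidence (supp M))ᵀ.rank_add_finrank_ker
  rw [hker, finrank_span_singleton hw₀, Matrix.rank_transpose] at this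
  simp only [Fintype.card_sum, Fintype.card_fin] at this
  omega

lemma DS.ker_incidence_supp_eq_bot_iff (hn : 0 < n) (hco : Nat.Coprime n m)
    (hM : DS n m M) :
    LinearMap.ker (incidence (supp M)).mulVecLin = ⊥ ↔ #(supp M) = n + m - 1 := by
  have := (incidence (supp M)).rank_add_finrank_ker
  rw [hM.rank_incidence_supp hn hco, Fintype.card_coe] at this
  rw [← Submodule.finrank_eq_zero]
  omega

theorem stmt9_general (n m : ℕ) (hn : 1 < n) (hco : Nat.Coprime n m)
    (M : Matrix (Fin n) (Fin m) ℝ) (hM : DS n m M) :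
    IsExtremal M ↔ (supp M).card = n + m - 1 := by
  rw [hM.isExtremal_iff, ← hM.ker_incidence_supp_eq_bot_iff (by omega) hco,
    ker_incidence_eq_bot_iff]
  simp only [mem_supp, not_not]

theorem stmt9 (n m : ℕ) (hn : 1 < n) (hnm : n ≤ m) (hco : Nat.Coprime n m)
    (M : Matrix (Fin n) (Fin m) ℝ) (hM : DS n m M) :
    IsExtremal M ↔ (supp M).card = n + m - 1 :=
  stmt9_general n m hn hco M hM
end

section
/- The 3 × 4 matrix F with rows (3,0,0,1), (0,2,2,0), (0,1,1,2) is doubly stochastic with uniform marginals (column sums 3, row sums 4), has |supp F| = 7 = S(3,4) + 1, but is not an extreme point of M(3,4). -/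
/-!
Every entry of a matrix in `M(3,4)` is at most its column sum `3`, so each row, summing to `4`,
has at least two nonzero entries; hence `|supp| ≥ 6`, attained by the northwest-corner matrix.
The support of `F` contains the 4-cycle of cells in rows `1, 2` and columns `1, 2` (0-indexed);
adding and subtracting the alternating `±1` matrix on that cycle writes `F` as the midpoint of two
distinct matrices of `M(3,4)`.
-/

open Finset

noncomputable def F : Matrix (Fin 3) (Fin 4) ℝ :=
  !![3,0,0,1; 0,2,2,0; 0,1,1,2]

section

variable {n m : ℕ}

lemma card_supp_eq_sum_card_row (A : Matrix (Fin n) (Fin m) ℝ) :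
    #(supp A) = ∑ i, #{j | A i j ≠ 0} := by
  simp only [supp, card_filter, Fintype.sum_prod_type]

namespace DS

variable {A : Matrix (Fin n) (Fin m) ℝ}

lemma entry_le (hA : DS n m A) (i : Fin n) (j : Fin m) : A i j ≤ n :=
  hA.2.1 j ▸ single_le_sum (fun i' _ => hA.1 i' j) (mem_univ i)

lemma le_mul_card_row (hA : DS n m A) (i : Fin n) : (m : ℝ) ≤ n * #{j | A i j ≠ 0} :=
  calc (m : ℝ) = ∑ j ∈ {j | A i j ≠ 0}, A i j := by rw [sum_filter_ne_zero, hA.2.2 i]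
    _ ≤ ∑ _j ∈ {j | A i j ≠ 0}, (n : ℝ) := sum_le_sum fun j _ => hA.entry_le i j
    _ = n * #{j | A i j ≠ 0} := by rw [sum_const, nsmul_eq_mul, mul_comm]

end DS

lemma S_eq_of_minimal {k : ℕ} (A₀ : Matrix (Fin n) (Fin m) ℝ) (hA₀ : DS n m A₀)
    (hcard : #(supp A₀) = k) (hmin : ∀ A, DS n m A → k ≤ #(supp A)) : S n m = k := by
  refine le_antisymm (Nat.sInf_le ⟨A₀, hA₀, hcard⟩) (le_csInf ⟨k, A₀, hA₀, hcard⟩ ?_)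
  rintro _ ⟨A, hA, rfl⟩
  exact hmin A hA

lemma not_isExtremal_of_eq_convex_combination {M A B : Matrix (Fin n) (Fin m) ℝ} {t : ℝ}
    (hA : DS n m A) (hB : DS n m B) (hAB : A ≠ B) (ht₀ : 0 < t) (ht₁ : t < 1)
    (hM : M = t • A + (1 - t) • B) : ¬ IsExtremal M := by
  rintro ⟨-, hext⟩
  obtain ⟨hAM, hBM⟩ := hext A B t hA hB ht₀ ht₁ hM
  exact hAB (hAM.trans hBM.symm)

end

lemma six_le_card_supp {A : Matrix (Fin 3) (Fin 4) ℝ} (hA : DS 3 4 A) : 6 ≤ #(supp A) := by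
  have hrow : ∀ i, 2 ≤ #{j | A i j ≠ 0} := fun i => by
    have := hA.le_mul_card_row i
    by_contra! h
    interval_cases hk : #{j | A i j ≠ 0} <;> norm_num [hk] at this
  rw [card_supp_eq_sum_card_row]
  calc 6 = ∑ _i : Fin 3, 2 := rfl
    _ ≤ _ := sum_le_sum fun i _ => hrow i

lemma DS_F : DS 3 4 F := by
  norm_num [DS, Fin.forall_fin_succ, Fin.sum_univ_succ, F]

lemma card_supp_F : #(supp F) = 7 := by
  simp [supp, card_filter, Fintype.sum_prod_type, Fin.sum_univ_succ, F]

noncomputable def northwestCorner : Matrix (Fin 3) (Fin 4) ℝ :=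
  !![3,1,0,0; 0,2,2,0; 0,0,1,3]

lemma DS_northwestCorner : DS 3 4 northwestCorner := by
  norm_num [DS, Fin.forall_fin_succ, Fin.sum_univ_succ, northwestCorner]

lemma card_supp_northwestCorner : #(supp northwestCorner) = 6 := by
  simp [supp, card_filter, Fintype.sum_prod_type, Fin.sum_univ_succ, northwestCorner]

noncomputable def Fplus : Matrix (Fin 3) (Fin 4) ℝ :=
  !![3,0,0,1; 0,3,1,0; 0,0,2,2]

noncomputable def Fminus : Matrix (Fin 3) (Fin 4) ℝ :=
  !![3,0,0,1; 0,1,3,0; 0,2,0,2]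

lemma DS_Fplus : DS 3 4 Fplus := by
  norm_num [DS, Fin.forall_fin_succ, Fin.sum_univ_succ, Fplus]

lemma DS_Fminus : DS 3 4 Fminus := by
  norm_num [DS, Fin.forall_fin_succ, Fin.sum_univ_succ, Fminus]

lemma Fplus_ne_Fminus : Fplus ≠ Fminus := fun h => by
  simpa [Fplus, Fminus] using congrFun₂ h 1 1

lemma F_eq_midpoint : F = (1 / 2 : ℝ) • Fplus + (1 - 1 / 2 : ℝ) • Fminus := by
  ext i j
  fin_cases i <;> fin_cases j <;> norm_num [F, Fplus, Fminus]

theorem stmt15 : DS 3 4 F ∧ (supp F).card = 7 ∧ S 3 4 = 6 ∧ ¬ IsExtremal F :=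
  ⟨DS_F, card_supp_F,
    S_eq_of_minimal northwestCorner DS_northwestCorner card_supp_northwestCorner
      fun _ => six_le_card_supp,
    not_isExtremal_of_eq_convex_combination DS_Fplus DS_Fminus Fplus_ne_Fminus
      (by norm_num) (by norm_num) F_eq_midpoint⟩
end
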